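/- Let ℙ and ℚ be Borel probability measures on ℝ^m with finite second moments, mean vectors μ_ℙ, μ_ℚ and covariance matrices Σ_ℙ, Σ_ℚ. Then the squared type-2 Wasserstein distance is bounded below by the squared Bures metric: W₂²(ℙ, ℚ) ≥ ‖μ_ℙ − μ_ℚ‖² + tr( Σ_ℙ + Σ_ℚ − 2 (Σ_ℚ^{1/2} Σ_ℙ Σ_ℚ^{1/2})^{1/2} ), where M^{1/2} denotes the positive semidefinite square root of a positive semidefinite matrix M. -/

import Mathlib

/-!
For a coupling `γ` of `P` and `Q`, expanding the square gives
`∫ ‖y₁ - y₂‖² dγ = ‖μP - μQ‖² + tr SP + tr SQ - 2 tr C`, where `C` is the cross-covariance of the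
two coordinates under `γ`. Positive semidefiniteness of the joint covariance,
`2 xᵀ C y ≤ xᵀ SP x + yᵀ SQ y`, forces `C = SP^{1/2} K SQ^{1/2}` with `‖K‖ ≤ 1` (conjugate `C` by
the pseudo-inverses of the square roots). With `Z = SQ^{1/2} SP^{1/2}` and
`N = (SQ^{1/2} SP SQ^{1/2})^{1/2}` we have `N² = Z Zᵀ`, and `tr C = tr (K Z) ≤ tr N` follows from
`0 ≤ tr (Dᵀ T D)` for `D = Kᵀ - T⁻¹ Z`, `T = N + ε I`, letting `ε → 0`.
-/

open MeasureTheory Matrix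

open scoped ComplexOrder in
/-- The positive semidefinite square root of a positive semidefinite matrix
(the definition removed from Mathlib, restated with its old meaning). -/
noncomputable def Matrix.PosSemidef.sqrt {n 𝕜 : Type*} [Fintype n] [DecidableEq n] [RCLike 𝕜]
    {A : Matrix n n 𝕜} (hA : A.PosSemidef) : Matrix n n 𝕜 :=
  hA.1.eigenvectorUnitary.1 * diagonal ((↑) ∘ (√·) ∘ hA.1.eigenvalues) *
  (star hA.1.eigenvectorUnitary : Matrix n n 𝕜)

lemma eq_zero_of_forall_mul_le {c b : ℝ} (h : ∀ t : ℝ, t * c ≤ b) : c = 0 := by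
  by_contra hc
  have := h ((b + 1) / c)
  rw [div_mul_cancel₀ _ hc] at this
  linarith

namespace Matrix

open scoped MatrixOrder

variable {n : Type*} [Fintype n] [DecidableEq n]

namespace PosSemidef

lemma sqrt_eq_cfc_sqrt {A : Matrix n n ℝ} (hA : A.PosSemidef) : hA.sqrt = CFC.sqrt A := by
  rw [CFC.sqrt_eq_real_sqrt A hA.nonneg, cfcₙ_eq_cfc, hA.1.cfc_eq, IsHermitian.cfc,
    Unitary.conjStarAlgAut_apply]
  rfl

lemma sqrt_mul_self {A : Matrix n n ℝ} (hA : A.PosSemidef) : hA.sqrt * hA.sqrt = A := by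
  rw [sqrt_eq_cfc_sqrt, CFC.sqrt_mul_sqrt_self A hA.nonneg]

lemma posSemidef_sqrt {A : Matrix n n ℝ} (hA : A.PosSemidef) : hA.sqrt.PosSemidef := by
  rw [sqrt_eq_cfc_sqrt, ← nonneg_iff_posSemidef]
  exact CFC.sqrt_nonneg A

lemma trace_mul_nonneg {A B : Matrix n n ℝ} (hA : A.PosSemidef) (hB : B.PosSemidef) :
    0 ≤ (A * B).trace := by
  have h := (hA.conjTranspose_mul_mul_same hB.sqrt).trace_nonneg
  rwa [hB.posSemidef_sqrt.1.eq, trace_mul_cycle, hB.sqrt_mul_self, trace_mul_comm] at h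

end PosSemidef

lemma cfc_mul_cfc (A : Matrix n n ℝ) (f g : ℝ → ℝ) :
    cfc f A * cfc g A = cfc (fun x => f x * g x) A :=
  (cfc_mul f g A (finite_real_spectrum.continuousOn _) (finite_real_spectrum.continuousOn _)).symm

omit [Fintype n] [DecidableEq n] in
lemma IsHermitian.transpose_eq {A : Matrix n n ℝ} (hA : A.IsHermitian) : Aᵀ = A := by
  rw [← conjTranspose_eq_transpose_of_trivial, hA.eq]

/- Since `0⁻¹ = 0`, `cfc (·⁻¹) A` is the Moore–Penrose pseudo-inverse of `A`, and
`A * cfc (·⁻¹) A = cfc (fun x => x * x⁻¹) A` is the orthogonal projection onto the range of `A`. -/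
namespace IsHermitian

variable {A : Matrix n n ℝ} (hA : A.IsHermitian)
include hA

lemma mul_cfc_inv : A * cfc (fun x : ℝ => x⁻¹) A = cfc (fun x : ℝ => x * x⁻¹) A := by
  nth_rw 1 [← cfc_id' ℝ A hA.isSelfAdjoint]
  exact cfc_mul_cfc _ _ _

lemma cfc_inv_mul : cfc (fun x : ℝ => x⁻¹) A * A = cfc (fun x : ℝ => x * x⁻¹) A := by
  nth_rw 2 [← cfc_id' ℝ A hA.isSelfAdjoint]
  rw [cfc_mul_cfc]
  exact cfc_congr fun x _ => mul_comm _ _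

lemma one_sub_mul_cfc_inv :
    1 - A * cfc (fun x : ℝ => x⁻¹) A = cfc (fun x : ℝ => 1 - x * x⁻¹) A := by
  rw [hA.mul_cfc_inv, cfc_sub _ _ A (finite_real_spectrum.continuousOn _)
    (finite_real_spectrum.continuousOn _), cfc_const_one ℝ A]

lemma mul_cfc_inv_mul_eq_self {C : Matrix n n ℝ} (hC : ∀ u, A *ᵥ u = 0 → u ᵥ* C = 0) :
    A * cfc (fun x : ℝ => x⁻¹) A * C = C := by
  have hAQ : A * cfc (fun x : ℝ => 1 - x * x⁻¹) A = 0 := by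
    nth_rw 1 [← cfc_id' ℝ A hA.isSelfAdjoint]
    rw [cfc_mul_cfc, ← cfc_zero ℝ A]
    exact cfc_congr fun x _ => by by_cases hx : x = 0 <;> simp [hx]
  have hQt := (cfc_predicate (fun x : ℝ => 1 - x * x⁻¹) A).isHermitian.transpose_eq
  rw [eq_comm, ← sub_eq_zero, ← one_sub_mul, hA.one_sub_mul_cfc_inv, ext_iff_vecMul]
  intro v
  rw [← vecMul_vecMul, ← hQt, vecMul_transpose, hC, vecMul_zero]
  rw [mulVec_mulVec, hAQ, zero_mulVec]

lemma dotProduct_mul_self_mulVec_cfc_inv_le (v : n → ℝ) :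
    (cfc (fun x : ℝ => x⁻¹) A *ᵥ v) ⬝ᵥ (A * A) *ᵥ (cfc (fun x : ℝ => x⁻¹) A *ᵥ v) ≤ v ⬝ᵥ v := by
  set R := cfc (fun x : ℝ => x⁻¹) A
  have hRt : Rᵀ = R := (cfc_predicate (fun x : ℝ => x⁻¹) A).isHermitian.transpose_eq
  have hRAAR : R * (A * A) * R = A * R := by
    rw [show R * (A * A) * R = R * A * (A * R) by simp only [Matrix.mul_assoc], hA.cfc_inv_mul,
      hA.mul_cfc_inv, cfc_mul_cfc]
    exact cfc_congr fun x _ => by by_cases hx : x = 0 <;> simp [hx]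
  have hQ : (1 - A * R).PosSemidef := by
    rw [← nonneg_iff_posSemidef, hA.one_sub_mul_cfc_inv]
    exact cfc_nonneg fun x _ => by by_cases hx : x = 0 <;> simp [hx]
  have h := hQ.dotProduct_mulVec_nonneg v
  rw [star_trivial, sub_mulVec, one_mulVec, dotProduct_sub, sub_nonneg, ← hRAAR] at h
  refine le_of_eq_of_le ?_ h
  rw [← hRt, dotProduct_comm, ← dotProduct_transpose_mulVec]
  simp only [hRt, mulVec_mulVec, Matrix.mul_assoc]

end IsHermitian

section Contraction

variable {A B C : Matrix n n ℝ}
  (h : ∀ x y, 2 * (x ⬝ᵥ C *ᵥ y) ≤ x ⬝ᵥ (A * A) *ᵥ x + y ⬝ᵥ (B * B) *ᵥ y)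
include h

omit [DecidableEq n] in
lemma vecMul_eq_zero_of_mulVec_eq_zero {u : n → ℝ} (hu : A *ᵥ u = 0) : u ᵥ* C = 0 := by
  have hCu : ∀ y, (u ᵥ* C) ⬝ᵥ y = 0 := fun y => by
    refine eq_zero_of_forall_mul_le (b := y ⬝ᵥ (B * B) *ᵥ y / 2) fun t => ?_
    have := h (t • u) y
    rw [← mulVec_mulVec, mulVec_smul, hu, smul_zero, mulVec_zero, dotProduct_zero, zero_add,
      smul_dotProduct, smul_eq_mul, dotProduct_mulVec] at this
    linarith
  exact dotProduct_self_eq_zero.mp (hCu _)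

omit [DecidableEq n] in
lemma two_mul_dotProduct_transpose_mulVec_le :
    ∀ y x, 2 * (y ⬝ᵥ Cᵀ *ᵥ x) ≤ y ⬝ᵥ (B * B) *ᵥ y + x ⬝ᵥ (A * A) *ᵥ x := fun y x => by
  rw [dotProduct_transpose_mulVec, add_comm]
  exact h x y

lemma exists_contraction_mul_mul_eq (hA : A.IsHermitian) (hB : B.IsHermitian) :
    ∃ K : Matrix n n ℝ, (∀ v w, 2 * (v ⬝ᵥ K *ᵥ w) ≤ v ⬝ᵥ v + w ⬝ᵥ w) ∧ A * K * B = C := by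
  set RA := cfc (fun x : ℝ => x⁻¹) A
  set RB := cfc (fun x : ℝ => x⁻¹) B
  have hRA : RAᵀ = RA := (cfc_predicate (fun x : ℝ => x⁻¹) A).isHermitian.transpose_eq
  have hRB : RBᵀ = RB := (cfc_predicate (fun x : ℝ => x⁻¹) B).isHermitian.transpose_eq
  refine ⟨RA * C * RB, fun v w => ?_, ?_⟩
  · have e : v ⬝ᵥ (RA * C * RB) *ᵥ w = (RA *ᵥ v) ⬝ᵥ C *ᵥ (RB *ᵥ w) := by
      rw [← mulVec_mulVec, ← mulVec_mulVec, dotProduct_mulVec, ← mulVec_transpose, hRA]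
    linarith [h (RA *ᵥ v) (RB *ᵥ w), hA.dotProduct_mul_self_mulVec_cfc_inv_le v,
      hB.dotProduct_mul_self_mulVec_cfc_inv_le w]
  · have hl := hA.mul_cfc_inv_mul_eq_self fun u hu => vecMul_eq_zero_of_mulVec_eq_zero h hu
    have hr := hB.mul_cfc_inv_mul_eq_self fun u hu =>
      vecMul_eq_zero_of_mulVec_eq_zero (two_mul_dotProduct_transpose_mulVec_le h) hu
    have hr' := congrArg transpose hr
    rw [transpose_mul, transpose_mul, transpose_transpose, hRB, hB.transpose_eq] at hr'
    calc A * (RA * C * RB) * B = A * RA * C * (RB * B) := by simp only [Matrix.mul_assoc]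
      _ = C := by rw [hl, hr']

end Contraction

lemma posSemidef_one_sub_transpose_mul_self {K : Matrix n n ℝ}
    (hK : ∀ v w, 2 * (v ⬝ᵥ K *ᵥ w) ≤ v ⬝ᵥ v + w ⬝ᵥ w) : (1 - Kᵀ * K).PosSemidef := by
  refine .of_dotProduct_mulVec_nonneg ?_ fun x => ?_
  · simp [IsHermitian, conjTranspose_eq_transpose_of_trivial, transpose_sub, transpose_mul]
  · rw [star_trivial, sub_mulVec, one_mulVec, dotProduct_sub, ← mulVec_mulVec,
      dotProduct_transpose_mulVec]
    linarith [hK (K *ᵥ x) x]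

lemma two_mul_trace_mul_le {K Z T : Matrix n n ℝ} (hK : (1 - Kᵀ * K).PosSemidef)
    (hT : T.PosDef) : 2 * (K * Z).trace ≤ T.trace + (Zᵀ * T⁻¹ * Z).trace := by
  have hdet : IsUnit T.det := hT.isUnit.map detMonoidHom
  have hTt : T⁻¹ᵀ = T⁻¹ := by rw [transpose_nonsing_inv, hT.1.transpose_eq]
  have hD := (hT.posSemidef.conjTranspose_mul_mul_same (Kᵀ - T⁻¹ * Z)).trace_nonneg
  have hKTK : (K * T * Kᵀ).trace ≤ T.trace := by
    have := hT.posSemidef.trace_mul_nonneg hK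
    rw [Matrix.mul_sub, Matrix.mul_one, trace_sub] at this
    rw [trace_mul_comm, ← Matrix.mul_assoc, trace_mul_comm]
    linarith
  simp only [conjTranspose_eq_transpose_of_trivial, transpose_sub, transpose_transpose,
    transpose_mul, hTt, sub_mul, mul_sub, Matrix.mul_assoc, mul_nonsing_inv_cancel_left _ _ hdet,
    nonsing_inv_mul_cancel_left _ _ hdet, trace_sub] at hD
  have hZK : (Zᵀ * Kᵀ).trace = (K * Z).trace := by rw [← transpose_mul, trace_transpose]
  simp only [Matrix.mul_assoc] at hKTK ⊢
  linarith

lemma trace_inv_add_smul_one_mul_mul_self_le {N : Matrix n n ℝ} (hN : N.PosSemidef) {δ : ℝ}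
    (hδ : 0 < δ) : ((N + δ • 1)⁻¹ * (N * N)).trace ≤ N.trace := by
  set T := N + δ • (1 : Matrix n n ℝ)
  have hT : T.PosDef := PosDef.posSemidef_add hN (PosDef.one.smul hδ)
  have hdet : IsUnit T.det := hT.isUnit.map detMonoidHom
  have hNN : N * N = N * T - δ • N := by simp [T, Matrix.mul_add]
  have hTN : 0 ≤ (T⁻¹ * N).trace := hT.inv.posSemidef.trace_mul_nonneg hN
  rw [hNN, Matrix.mul_sub, Matrix.mul_smul, trace_sub, trace_smul, ← Matrix.mul_assoc,
    trace_mul_cycle, mul_nonsing_inv _ hdet, Matrix.one_mul, smul_eq_mul]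
  nlinarith

lemma trace_mul_le_trace_of_mul_self_eq {K Z N : Matrix n n ℝ} (hK : (1 - Kᵀ * K).PosSemidef)
    (hN : N.PosSemidef) (hZ : N * N = Z * Zᵀ) : (K * Z).trace ≤ N.trace := by
  refine le_of_forall_pos_le_add fun ε hε => ?_
  have hc : (0 : ℝ) ≤ Fintype.card n := Nat.cast_nonneg _
  set δ := 2 * ε / (Fintype.card n + 1)
  have hδ : 0 < δ := by positivity
  have hδc : δ * Fintype.card n ≤ 2 * ε := by
    rw [div_mul_eq_mul_div, div_le_iff₀ (by positivity)]
    nlinarith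
  have hT : (N + δ • 1).PosDef := PosDef.posSemidef_add hN (PosDef.one.smul hδ)
  have hZT : (Zᵀ * (N + δ • 1)⁻¹ * Z).trace = ((N + δ • 1)⁻¹ * (N * N)).trace := by
    rw [hZ, trace_mul_comm, ← Matrix.mul_assoc, trace_mul_comm]
  have htr : (N + δ • 1).trace = N.trace + δ * Fintype.card n := by
    simp [trace_add, trace_smul, mul_comm]
  linarith [two_mul_trace_mul_le (Z := Z) hK hT, trace_inv_add_smul_one_mul_mul_self_le hN hδ]

theorem trace_le_trace_sqrt_of_two_mul_le {SP SQ C : Matrix n n ℝ} (hSP : SP.PosSemidef)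
    (hSQ : SQ.PosSemidef) (hMid : (hSQ.sqrt * SP * hSQ.sqrt).PosSemidef)
    (h : ∀ x y, 2 * (x ⬝ᵥ C *ᵥ y) ≤ x ⬝ᵥ SP *ᵥ x + y ⬝ᵥ SQ *ᵥ y) :
    C.trace ≤ hMid.sqrt.trace := by
  have hA := hSP.posSemidef_sqrt.1
  have hB := hSQ.posSemidef_sqrt.1
  rw [← hSP.sqrt_mul_self, ← hSQ.sqrt_mul_self] at h
  obtain ⟨K, hK, rfl⟩ := exists_contraction_mul_mul_eq h hA hB
  rw [trace_mul_cycle, trace_mul_comm]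
  refine trace_mul_le_trace_of_mul_self_eq (posSemidef_one_sub_transpose_mul_self hK)
    hMid.posSemidef_sqrt ?_
  rw [hMid.sqrt_mul_self, transpose_mul, hA.transpose_eq, hB.transpose_eq]
  nth_rw 1 [← hSP.sqrt_mul_self]
  simp only [Matrix.mul_assoc]

end Matrix

namespace ProbabilityTheory

variable {Ω ι : Type*} [MeasurableSpace Ω] {μ : Measure Ω}

noncomputable def crossCovMatrix (X Y : ι → Ω → ℝ) (μ : Measure Ω) : Matrix ι ι ℝ :=
  Matrix.of fun i j => cov[X i, Y j; μ]

lemma covariance_sum_mul_sum_mul [Fintype ι] [IsFiniteMeasure μ] {X Y : ι → Ω → ℝ}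
    (hX : ∀ i, MemLp (X i) 2 μ) (hY : ∀ i, MemLp (Y i) 2 μ) (x y : ι → ℝ) :
    cov[fun ω => ∑ i, x i * X i ω, fun ω => ∑ j, y j * Y j ω; μ] =
      x ⬝ᵥ crossCovMatrix X Y μ *ᵥ y := by
  rw [covariance_fun_sum_fun_sum (fun i => (hX i).const_mul (x i)) fun j => (hY j).const_mul (y j)]
  simp only [covariance_const_mul_left, covariance_const_mul_right, dotProduct, mulVec,
    crossCovMatrix, Matrix.of_apply, Finset.mul_sum]
  exact Finset.sum_congr rfl fun i _ => Finset.sum_congr rfl fun j _ => by ring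

lemma two_mul_dotProduct_crossCovMatrix_le [Fintype ι] [IsFiniteMeasure μ] {X Y : ι → Ω → ℝ}
    (hX : ∀ i, MemLp (X i) 2 μ) (hY : ∀ i, MemLp (Y i) 2 μ) (x y : ι → ℝ) :
    2 * (x ⬝ᵥ crossCovMatrix X Y μ *ᵥ y) ≤
      x ⬝ᵥ crossCovMatrix X X μ *ᵥ x + y ⬝ᵥ crossCovMatrix Y Y μ *ᵥ y := by
  have hU : MemLp (fun ω => ∑ i, x i * X i ω) 2 μ :=
    memLp_finsetSum _ fun i _ => (hX i).const_mul (x i)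
  have hV : MemLp (fun ω => ∑ j, y j * Y j ω) 2 μ :=
    memLp_finsetSum _ fun j _ => (hY j).const_mul (y j)
  have h := variance_nonneg (fun ω => ∑ i, x i * X i ω - ∑ j, y j * Y j ω) μ
  rw [variance_fun_sub hU hV, ← covariance_self hU.aemeasurable,
    ← covariance_self hV.aemeasurable, covariance_sum_mul_sum_mul hX hX,
    covariance_sum_mul_sum_mul hX hY, covariance_sum_mul_sum_mul hY hY] at h
  linarith

lemma integral_sq_sub_eq [IsProbabilityMeasure μ] {U V : Ω → ℝ} (hU : MemLp U 2 μ)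
    (hV : MemLp V 2 μ) :
    ∫ ω, (U ω - V ω) ^ 2 ∂μ =
      (μ[U] - μ[V]) ^ 2 + cov[U, U; μ] + cov[V, V; μ] - 2 * cov[U, V; μ] := by
  have h := variance_eq_sub (hU.sub hV)
  rw [variance_sub hU hV, ← covariance_self hU.aemeasurable,
    ← covariance_self hV.aemeasurable] at h
  simp only [Pi.pow_apply, Pi.sub_apply,
    integral_sub (hU.integrable one_le_two) (hV.integrable one_le_two)] at h
  linarith

lemma crossCovMatrix_eval_comp_of_map_eq {f : Ω → ι → ℝ} (hf : Measurable f)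
    {P : Measure (ι → ℝ)} (hP : μ.map f = P) {μP : ι → ℝ} (hμP : ∀ i, μP i = ∫ y, y i ∂P)
    {SP : Matrix ι ι ℝ} (hSPdef : ∀ i j, SP i j = ∫ y, (y i - μP i) * (y j - μP j) ∂P) :
    crossCovMatrix (fun i ω => f ω i) (fun i ω => f ω i) μ = SP := by
  ext i j
  rw [hSPdef, hμP, hμP, ← hP]
  exact (covariance_map (measurable_pi_apply i).aestronglyMeasurable
    (measurable_pi_apply j).aestronglyMeasurable hf.aemeasurable).symm

theorem gelbrich_le_integral_sum_sq_sub [Fintype ι] [DecidableEq ι] [IsProbabilityMeasure μ]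
    {X Y : ι → Ω → ℝ} (hX : ∀ i, MemLp (X i) 2 μ) (hY : ∀ i, MemLp (Y i) 2 μ)
    {SP SQ : Matrix ι ι ℝ} (hSPX : crossCovMatrix X X μ = SP) (hSQY : crossCovMatrix Y Y μ = SQ)
    (hSP : SP.PosSemidef) (hSQ : SQ.PosSemidef) (hMid : (hSQ.sqrt * SP * hSQ.sqrt).PosSemidef) :
    ∑ i, (μ[X i] - μ[Y i]) ^ 2 + (SP + SQ - 2 • hMid.sqrt).trace ≤
      ∫ ω, ∑ i, (X i ω - Y i ω) ^ 2 ∂μ := by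
  have hC := Matrix.trace_le_trace_sqrt_of_two_mul_le hSP hSQ hMid
    (hSPX ▸ hSQY ▸ two_mul_dotProduct_crossCovMatrix_le hX hY)
  subst hSPX hSQY
  have htr (Z W : ι → Ω → ℝ) : (crossCovMatrix Z W μ).trace = ∑ i, cov[Z i, W i; μ] := rfl
  rw [integral_finsetSum _ fun i _ =>
      ((hX i).sub (hY i)).integrable_sq (f := fun ω => X i ω - Y i ω),
    Matrix.trace_sub, Matrix.trace_add, Matrix.trace_smul, nsmul_eq_mul, Nat.cast_ofNat]
  simp only [integral_sq_sub_eq (hX _) (hY _), Finset.sum_sub_distrib, Finset.sum_add_distrib,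
    ← Finset.mul_sum, ← htr]
  linarith

end ProbabilityTheory

theorem wasserstein2_sq_ge_bures_sq
    {m : ℕ} (P Q : Measure (Fin m → ℝ))
    [IsProbabilityMeasure P] [IsProbabilityMeasure Q]
    (hP2 : ∀ i, MemLp (fun y : Fin m → ℝ => y i) 2 P)
    (hQ2 : ∀ i, MemLp (fun y : Fin m → ℝ => y i) 2 Q)
    (μP μQ : Fin m → ℝ)
    (hμP : ∀ i, μP i = ∫ y : Fin m → ℝ, y i ∂P)
    (hμQ : ∀ i, μQ i = ∫ y : Fin m → ℝ, y i ∂Q)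
    (SP SQ : Matrix (Fin m) (Fin m) ℝ)
    (hSPdef : ∀ i j, SP i j = ∫ y : Fin m → ℝ, (y i - μP i) * (y j - μP j) ∂P)
    (hSQdef : ∀ i j, SQ i j = ∫ y : Fin m → ℝ, (y i - μQ i) * (y j - μQ j) ∂Q)
    (hSP : SP.PosSemidef) (hSQ : SQ.PosSemidef)
    (hMid : (hSQ.sqrt * SP * hSQ.sqrt).PosSemidef) :
    ∑ i, (μP i - μQ i) ^ 2 + (SP + SQ - 2 • hMid.sqrt).trace ≤
      sInf {x : ℝ | ∃ γ : Measure ((Fin m → ℝ) × (Fin m → ℝ)),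
        IsProbabilityMeasure γ ∧ γ.map Prod.fst = P ∧ γ.map Prod.snd = Q ∧
        x = ∫ p, ∑ i, (p.1 i - p.2 i) ^ 2 ∂γ} := by
  refine le_csInf ⟨_, P.prod Q, inferInstance, by simp, by simp, rfl⟩ ?_
  rintro _ ⟨γ, hγ, hγP, hγQ, rfl⟩
  have hX i : MemLp (fun p : (Fin m → ℝ) × (Fin m → ℝ) => p.1 i) 2 γ :=
    (hγP ▸ hP2 i).comp_of_map measurable_fst.aemeasurable
  have hY i : MemLp (fun p : (Fin m → ℝ) × (Fin m → ℝ) => p.2 i) 2 γ :=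
    (hγQ ▸ hQ2 i).comp_of_map measurable_snd.aemeasurable
  have hmeanX i : ∫ p, p.1 i ∂γ = μP i := by
    rw [hμP, ← hγP, integral_map measurable_fst.aemeasurable (hγP ▸ hP2 i).aestronglyMeasurable]
  have hmeanY i : ∫ p, p.2 i ∂γ = μQ i := by
    rw [hμQ, ← hγQ, integral_map measurable_snd.aemeasurable (hγQ ▸ hQ2 i).aestronglyMeasurable]
  have h := ProbabilityTheory.gelbrich_le_integral_sum_sq_sub hX hY
    (ProbabilityTheory.crossCovMatrix_eval_comp_of_map_eq measurable_fst hγP hμP hSPdef)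
    (ProbabilityTheory.crossCovMatrix_eval_comp_of_map_eq measurable_snd hγQ hμQ hSQdef)
    hSP hSQ hMid
  simpa only [hmeanX, hmeanY] using h
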